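/- Let A : Ω × ℝⁿ → ℝⁿ satisfy |A(x,ξ)| ≤ ℓ (μ² + |ξ|²)^{(p-1)/2} and |D_x A(x,ξ)| ≤ g(x)(μ² + |ξ|²)^{(p-1)/2} with g ∈ Lⁿ_loc(Ω) (equivalently x ↦ A(x,ξ) ∈ W^{1,n}_loc uniformly in ξ with weight). Then A is locally uniformly in VMO: for each compact K ⊂ Ω, limsup_{R→0} sup_{r<R} sup_{x₀∈K} ⨍_{B_r(x₀)} V(x, B_r(x₀)) dx = 0, where V(x,B) = sup_{ξ≠0} |A(x,ξ) − A_B(ξ)| / (μ² + |ξ|²)^{(p-1)/2} and A_B(ξ) = ⨍_B A(y,ξ) dy. -/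

import Mathlib

open MeasureTheory Metric Filter
open scoped ENNReal NNReal Topology

/-- `V(x, B) = sup_{ξ ≠ 0} |A(x,ξ) − A_B(ξ)| / (μ² + |ξ|²)^{(p-1)/2}`, where
`A_B(ξ) = ⨍_B A(y,ξ) dy`. -/
noncomputable def oscV {n : ℕ} (p μ : ℝ)
    (A : EuclideanSpace ℝ (Fin n) → EuclideanSpace ℝ (Fin n) → EuclideanSpace ℝ (Fin n))
    (B : Set (EuclideanSpace ℝ (Fin n))) (x : EuclideanSpace ℝ (Fin n)) : ℝ :=
  ⨆ ξ : {ξ : EuclideanSpace ℝ (Fin n) // ξ ≠ 0},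
    ‖A x ξ.1 - ⨍ y in B, A y ξ.1‖ / (μ ^ 2 + ‖ξ.1‖ ^ 2) ^ ((p - 1) / 2)

/-!
Fix a ball `B = B_r(x₀)` and `ξ ≠ 0`. Averaging the Hajłasz inequality
`|A(x,ξ) - A(y,ξ)| ≤ (g x + g y) |x - y| (μ² + |ξ|²)^{(p-1)/2}` over `y ∈ B` gives
`V(x,B) ≤ 2r (g x + ⨍_B g)`, hence `⨍_B V(·,B) ≤ 4r ⨍_B g`. By Jensen,
`r ⨍_B g ≤ r (⨍_B gⁿ)^{1/n} = |B_1|^{-1/n} (∫_B gⁿ)^{1/n}`: the factor `r` is exactly absorbed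
because the exponent is the dimension. Finally `∫_B gⁿ` is uniformly small for small `r` by
absolute continuity of the integral of `gⁿ` over a compact neighbourhood of `K` inside `Ω`.
-/

open Module
open scoped ProbabilityTheory

theorem setAverage_nonneg {α : Type*} [MeasurableSpace α] {μ : Measure α} {f : α → ℝ}
    {s : Set α} (hs : MeasurableSet s) (hf : ∀ x ∈ s, 0 ≤ f x) : 0 ≤ ⨍ x in s, f x ∂μ := by
  rw [setAverage_eq]
  exact smul_nonneg (inv_nonneg.2 measureReal_nonneg) (setIntegral_nonneg hs hf)

theorem integrableOn_of_integrableOn_rpow {α : Type*} [MeasurableSpace α] {μ : Measure α}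
    {f : α → ℝ} {s : Set α} (hs : μ s ≠ ∞) {q : ℝ} (hq : 1 ≤ q) (hf0 : ∀ x, 0 ≤ f x)
    (hf : AEStronglyMeasurable f (μ.restrict s)) (hfq : IntegrableOn (fun x => f x ^ q) s μ) :
    IntegrableOn f s μ := by
  have : Fact (μ s < ∞) := ⟨hs.lt_top⟩
  refine ((integrable_const 1).add hfq).mono' hf (Eventually.of_forall fun x => ?_)
  rw [Real.norm_of_nonneg (hf0 x), Pi.add_apply]
  rcases le_total (f x) 1 with h | h
  · linarith [Real.rpow_nonneg (hf0 x) q]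
  · linarith [Real.self_le_rpow_of_one_le h hq]

section Hajlasz

variable {X E : Type*} [PseudoMetricSpace X] [NormedAddCommGroup E] {f : X → E} {g : X → ℝ}
  {B : Set X}

theorem norm_sub_le_mul_diam (hB : Bornology.IsBounded B) (hg0 : ∀ y ∈ B, 0 ≤ g y)
    (hfg : ∀ x ∈ B, ∀ y ∈ B, ‖f x - f y‖ ≤ (g x + g y) * dist x y) {x y : X}
    (hx : x ∈ B) (hy : y ∈ B) : ‖f x - f y‖ ≤ diam B * (g x + g y) :=
  (hfg x hx y hy).trans <| by
    rw [mul_comm]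
    exact mul_le_mul_of_nonneg_right (dist_le_diam_of_mem hB hx hy)
      (add_nonneg (hg0 x hx) (hg0 y hy))

variable [MeasurableSpace X] {μ : Measure X}

theorem integrableOn_of_norm_sub_le (hB : Bornology.IsBounded B) (hBm : MeasurableSet B)
    (hμB : μ B ≠ ∞)
    (hf : AEStronglyMeasurable f (μ.restrict B)) (hg : IntegrableOn g B μ)
    (hg0 : ∀ y ∈ B, 0 ≤ g y) (hfg : ∀ x ∈ B, ∀ y ∈ B, ‖f x - f y‖ ≤ (g x + g y) * dist x y) :
    IntegrableOn f B μ := by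
  rcases B.eq_empty_or_nonempty with rfl | ⟨x₀, hx₀⟩
  · exact integrableOn_empty
  have : Fact (μ B < ∞) := ⟨hμB.lt_top⟩
  refine ((integrable_const (‖f x₀‖ + diam B * g x₀)).add (hg.const_mul (diam B))).mono' hf
    (ae_restrict_of_forall_mem hBm fun y hy => ?_)
  calc ‖f y‖ ≤ ‖f x₀‖ + ‖f x₀ - f y‖ := by
        rw [norm_sub_rev]; exact norm_le_norm_add_norm_sub' _ _
    _ ≤ ‖f x₀‖ + diam B * (g x₀ + g y) := by grw [norm_sub_le_mul_diam hB hg0 hfg hx₀ hy]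
    _ = _ := by simp only [Pi.add_apply]; ring

theorem norm_sub_setAverage_le [NormedSpace ℝ E] [CompleteSpace E] (hB : Bornology.IsBounded B)
    (hBm : MeasurableSet B) (hμB0 : μ B ≠ 0) (hμB : μ B ≠ ∞) (hf : IntegrableOn f B μ)
    (hg : IntegrableOn g B μ) (hg0 : ∀ y ∈ B, 0 ≤ g y)
    (hfg : ∀ x ∈ B, ∀ y ∈ B, ‖f x - f y‖ ≤ (g x + g y) * dist x y) {x : X} (hx : x ∈ B) :
    ‖f x - ⨍ y in B, f y ∂μ‖ ≤ diam B * (g x + ⨍ y in B, g y ∂μ) := by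
  have := ProbabilityTheory.cond_isProbabilityMeasure_of_finite hμB0 hμB
  rw [setAverage_eq', setAverage_eq']
  have hc : (μ B)⁻¹ ≠ ∞ := ENNReal.inv_ne_top.2 hμB0
  have hfν : Integrable f (μ[|B]) := hf.smul_measure hc
  have hgν : Integrable g (μ[|B]) := hg.smul_measure hc
  have hbound : ∀ᵐ y ∂(μ[|B]), ‖f x - f y‖ ≤ diam B * (g x + g y) :=
    Measure.ae_smul_measure (ae_restrict_of_forall_mem hBm fun y hy =>
      norm_sub_le_mul_diam hB hg0 hfg hx hy) _
  calc ‖f x - ∫ y, f y ∂(μ[|B])‖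
      = ‖∫ y, (f x - f y) ∂(μ[|B])‖ := by
        rw [integral_sub (integrable_const _) hfν, integral_const, probReal_univ, one_smul]
    _ ≤ ∫ y, ‖f x - f y‖ ∂(μ[|B]) := norm_integral_le_integral_norm _
    _ ≤ ∫ y, diam B * (g x + g y) ∂(μ[|B]) :=
        integral_mono_ae ((integrable_const _).sub hfν).norm
          (((integrable_const _).add hgν).const_mul _) hbound
    _ = diam B * (g x + ∫ y, g y ∂(μ[|B])) := by
        rw [integral_const_mul, integral_add (integrable_const _) hgν, integral_const,
          probReal_univ, one_smul]

end Hajlasz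

section Ball

variable {E : Type*} [NormedAddCommGroup E] [NormedSpace ℝ E] [FiniteDimensional ℝ E]
  [MeasurableSpace E] [BorelSpace E] [Nontrivial E] (μ : Measure E) [μ.IsAddHaarMeasure]

theorem mul_setAverage_ball_le {g : E → ℝ} {x : E} {r : ℝ} (hr : 0 < r)
    (hg0 : ∀ y ∈ ball x r, 0 ≤ g y) (hg : IntegrableOn g (ball x r) μ)
    (hgd : IntegrableOn (fun y => g y ^ (finrank ℝ E : ℝ)) (ball x r) μ) :
    r * ⨍ y in ball x r, g y ∂μ ≤ μ.real (ball 0 1) ^ (-(finrank ℝ E : ℝ)⁻¹) *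
      (∫ y in ball x r, g y ^ (finrank ℝ E : ℝ) ∂μ) ^ (finrank ℝ E : ℝ)⁻¹ := by
  set d := finrank ℝ E
  have hd : (1 : ℝ) ≤ d := by exact_mod_cast finrank_pos
  have hω : 0 < μ.real (ball 0 1) :=
    ENNReal.toReal_pos (measure_ball_pos μ _ one_pos).ne' measure_ball_lt_top.ne
  have hball : μ.real (ball x r) = r ^ d * μ.real (ball 0 1) := by
    rw [measureReal_def, measureReal_def, Measure.addHaar_ball_of_pos μ x hr, ENNReal.toReal_mul,
      ENNReal.toReal_ofReal (by positivity)]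
  have hjensen : (⨍ y in ball x r, g y ∂μ) ^ (d : ℝ) ≤
      (r ^ d * μ.real (ball 0 1))⁻¹ * ∫ y in ball x r, g y ^ (d : ℝ) ∂μ :=
    ((convexOn_rpow hd).map_set_average_le
      (Real.continuous_rpow_const (by linarith)).continuousOn isClosed_Ici
      (measure_ball_pos μ x hr).ne' measure_ball_lt_top.ne
      (ae_restrict_of_forall_mem measurableSet_ball hg0) hg hgd).trans_eq
      (by rw [setAverage_eq, smul_eq_mul, hball])
  have ha0 : 0 ≤ ⨍ y in ball x r, g y ∂μ := setAverage_nonneg measurableSet_ball hg0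
  calc r * ⨍ y in ball x r, g y ∂μ
      = r * ((⨍ y in ball x r, g y ∂μ) ^ (d : ℝ)) ^ (d : ℝ)⁻¹ := by
        rw [Real.rpow_rpow_inv ha0 (by positivity)]
    _ ≤ r * ((r ^ d * μ.real (ball 0 1))⁻¹ * ∫ y in ball x r, g y ^ (d : ℝ) ∂μ) ^ (d : ℝ)⁻¹ := by
        gcongr
    _ = μ.real (ball 0 1) ^ (-(d : ℝ)⁻¹) * (∫ y in ball x r, g y ^ (d : ℝ) ∂μ) ^ (d : ℝ)⁻¹ := by
        have hJ : 0 ≤ ∫ y in ball x r, g y ^ (d : ℝ) ∂μ :=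
          setIntegral_nonneg measurableSet_ball fun y hy => Real.rpow_nonneg (hg0 y hy) _
        rw [mul_inv, Real.mul_rpow (by positivity) hJ,
          Real.mul_rpow (by positivity) (by positivity),
          Real.inv_rpow (by positivity), Real.pow_rpow_inv_natCast hr.le finrank_pos.ne',
          Real.inv_rpow hω.le, ← Real.rpow_neg hω.le]
        field_simp

theorem MeasureTheory.IntegrableOn.eventually_forall_setIntegral_ball_le {f : E → ℝ} {s : Set E}
    (hs : MeasurableSet s) (hf : IntegrableOn f s μ) {ε : ℝ} (hε : 0 < ε) :
    ∀ᶠ r in 𝓝[>] 0, ∀ x, ball x r ⊆ s → ∫ y in ball x r, f y ∂μ ≤ ε := by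
  have hμr : Tendsto (fun r : ℝ => ENNReal.ofReal (r ^ finrank ℝ E) * μ (ball 0 1))
      (𝓝[>] 0) (𝓝 0) := by
    have : Tendsto (fun r : ℝ => ENNReal.ofReal (r ^ finrank ℝ E)) (𝓝[>] 0) (𝓝 0) := by
      have := ((ENNReal.continuous_ofReal.comp (continuous_pow (finrank ℝ E))).tendsto 0).mono_left
        (nhdsWithin_le_nhds (s := Set.Ioi 0))
      simpa [Function.comp_def, finrank_pos.ne'] using this
    simpa using ENNReal.Tendsto.mul_const this (Or.inr measure_ball_lt_top.ne)
  have hμ : Tendsto (fun q : ℝ × E => μ (ball q.2 q.1)) (𝓝[>] 0 ×ˢ ⊤) (𝓝 0) := by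
    refine (hμr.comp tendsto_fst).congr' ?_
    filter_upwards [prod_mem_prod self_mem_nhdsWithin univ_mem] with q hq
    exact (Measure.addHaar_ball_of_pos μ _ hq.1).symm
  have hsmall := ((hf.integrable_indicator hs).tendsto_setIntegral_nhds_zero hμ).eventually
    (eventually_le_nhds hε)
  filter_upwards [hsmall.curry] with r hr x hxs
  simpa [setIntegral_indicator hs, Set.inter_eq_self_of_subset_left hxs] using hr x

end Ball

theorem limsup_iSup_Ioo_eq_zero {Φ : ℝ → ℝ} (hΦ0 : ∀ r, 0 ≤ Φ r)
    (hΦ : ∀ ε > 0, ∀ᶠ r in 𝓝[>] 0, Φ r ≤ ε) :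
    limsup (fun R => ⨆ r ∈ Set.Ioo 0 R, Φ r) (𝓝[>] 0) = 0 := by
  refine Tendsto.limsup_eq (tendsto_order.2 ⟨fun a ha => Eventually.of_forall fun R =>
    ha.trans_le (Real.iSup_nonneg fun r => Real.iSup_nonneg fun _ => hΦ0 r), fun a ha => ?_⟩)
  obtain ⟨R₀, hR₀, hsub⟩ := mem_nhdsGT_iff_exists_Ioo_subset.1 (hΦ (a / 2) (by linarith))
  filter_upwards [Ioo_mem_nhdsGT hR₀] with R hR
  calc ⨆ r ∈ Set.Ioo 0 R, Φ r ≤ a / 2 :=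
        Real.iSup_le (fun r => Real.iSup_le (fun hr => hsub ⟨hr.1, hr.2.trans hR.2⟩)
          (by linarith)) (by linarith)
    _ < a := by linarith

section Oscillation

variable {n : ℕ} {p μ : ℝ}
  {A : EuclideanSpace ℝ (Fin n) → EuclideanSpace ℝ (Fin n) → EuclideanSpace ℝ (Fin n)}
  {g : EuclideanSpace ℝ (Fin n) → ℝ} {B : Set (EuclideanSpace ℝ (Fin n))}

theorem oscV_nonneg (x : EuclideanSpace ℝ (Fin n)) : 0 ≤ oscV p μ A B x :=
  Real.iSup_nonneg fun _ => div_nonneg (norm_nonneg _) (Real.rpow_nonneg (by positivity) _)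

theorem oscV_le_diam_mul (hB : Bornology.IsBounded B) (hBm : MeasurableSet B) (hB0 : volume B ≠ 0)
    (hBfin : volume B ≠ ∞) (hA : ∀ ξ, IntegrableOn (fun y => A y ξ) B)
    (hg : IntegrableOn g B) (hg0 : ∀ y ∈ B, 0 ≤ g y)
    (hsob : ∀ x ∈ B, ∀ y ∈ B, ∀ ξ,
      ‖A x ξ - A y ξ‖ ≤ (g x + g y) * ‖x - y‖ * (μ ^ 2 + ‖ξ‖ ^ 2) ^ ((p - 1) / 2))
    {x : EuclideanSpace ℝ (Fin n)} (hx : x ∈ B) :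
    oscV p μ A B x ≤ diam B * (g x + ⨍ y in B, g y) := by
  refine Real.iSup_le (fun ⟨ξ, hξ⟩ => ?_)
    (mul_nonneg diam_nonneg (add_nonneg (hg0 x hx) (setAverage_nonneg hBm hg0)))
  set w := (μ ^ 2 + ‖ξ‖ ^ 2) ^ ((p - 1) / 2)
  have hw : 0 < w := Real.rpow_pos_of_pos (by positivity) _
  have hgw0 : ∀ y ∈ B, 0 ≤ g y * w := fun y hy => mul_nonneg (hg0 y hy) hw.le
  have hAgw : ∀ x ∈ B, ∀ y ∈ B, ‖A x ξ - A y ξ‖ ≤ (g x * w + g y * w) * dist x y :=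
    fun x hx y hy => (hsob x hx y hy ξ).trans_eq (by rw [dist_eq_norm]; ring)
  have := norm_sub_setAverage_le hB hBm hB0 hBfin (hA ξ) (hg.mul_const w) hgw0 hAgw hx
  rw [div_le_iff₀ hw]
  calc ‖A x ξ - ⨍ y in B, A y ξ‖ ≤ diam B * (g x * w + ⨍ y in B, g y * w) := this
    _ = diam B * (g x + ⨍ y in B, g y) * w := by
        rw [setAverage_eq, setAverage_eq, integral_mul_const, smul_eq_mul, smul_eq_mul]; ring

theorem setAverage_oscV_le (hB : Bornology.IsBounded B) (hBm : MeasurableSet B)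
    (hB0 : volume B ≠ 0) (hBfin : volume B ≠ ∞)
    (hA : ∀ ξ, AEStronglyMeasurable (fun y => A y ξ) (volume.restrict B))
    (hg : IntegrableOn g B) (hg0 : ∀ y ∈ B, 0 ≤ g y)
    (hsob : ∀ x ∈ B, ∀ y ∈ B, ∀ ξ,
      ‖A x ξ - A y ξ‖ ≤ (g x + g y) * ‖x - y‖ * (μ ^ 2 + ‖ξ‖ ^ 2) ^ ((p - 1) / 2)) :
    ⨍ x in B, oscV p μ A B x ≤ 2 * diam B * ⨍ y in B, g y := by
  have hAi : ∀ ξ, IntegrableOn (fun y => A y ξ) B := fun ξ =>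
    integrableOn_of_norm_sub_le hB hBm hBfin (hA ξ) (hg.mul_const _)
      (fun y hy => mul_nonneg (hg0 y hy)
        (Real.rpow_nonneg (add_nonneg (sq_nonneg μ) (sq_nonneg _)) _))
      fun x hx y hy => (hsob x hx y hy ξ).trans_eq (by rw [dist_eq_norm]; ring)
  have := ProbabilityTheory.cond_isProbabilityMeasure_of_finite hB0 hBfin
  have hgν : Integrable g (volume[|B]) := hg.smul_measure (ENNReal.inv_ne_top.2 hB0)
  have hgavg : ⨍ y in B, g y = ∫ y, g y ∂volume[|B] := setAverage_eq' volume g B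
  rw [setAverage_eq']
  calc ∫ x, oscV p μ A B x ∂(volume[|B])
      ≤ ∫ x, diam B * (g x + ⨍ y in B, g y) ∂(volume[|B]) :=
        integral_mono_of_nonneg (Eventually.of_forall oscV_nonneg)
          ((hgν.add (integrable_const _)).const_mul _)
          (Measure.ae_smul_measure (ae_restrict_of_forall_mem hBm fun x hx =>
            oscV_le_diam_mul hB hBm hB0 hBfin hAi hg hg0 hsob hx) _)
    _ = 2 * diam B * ⨍ y in B, g y := by
        rw [integral_const_mul, integral_add hgν (integrable_const _), integral_const,
          probReal_univ, one_smul, hgavg]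
        ring

theorem setAverage_oscV_ball_le [NeZero n] {x₀ : EuclideanSpace ℝ (Fin n)} {r : ℝ} (hr : 0 < r)
    (hA : ∀ ξ, AEStronglyMeasurable (fun y => A y ξ) (volume.restrict (ball x₀ r)))
    (hg0 : ∀ y ∈ ball x₀ r, 0 ≤ g y) (hg : IntegrableOn g (ball x₀ r))
    (hgn : IntegrableOn (fun y => g y ^ (n : ℝ)) (ball x₀ r))
    (hsob : ∀ x ∈ ball x₀ r, ∀ y ∈ ball x₀ r, ∀ ξ,
      ‖A x ξ - A y ξ‖ ≤ (g x + g y) * ‖x - y‖ * (μ ^ 2 + ‖ξ‖ ^ 2) ^ ((p - 1) / 2)) :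
    ⨍ x in ball x₀ r, oscV p μ A (ball x₀ r) x ≤
      4 * volume.real (ball (0 : EuclideanSpace ℝ (Fin n)) 1) ^ (-(n : ℝ)⁻¹) *
        (∫ y in ball x₀ r, g y ^ (n : ℝ)) ^ (n : ℝ)⁻¹ := by
  have hHolder := mul_setAverage_ball_le volume hr hg0 hg (by rwa [finrank_euclideanSpace_fin])
  rw [finrank_euclideanSpace_fin] at hHolder
  calc ⨍ x in ball x₀ r, oscV p μ A (ball x₀ r) x
      ≤ 2 * diam (ball x₀ r) * ⨍ y in ball x₀ r, g y :=
        setAverage_oscV_le isBounded_ball measurableSet_ball (measure_ball_pos _ _ hr).ne'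
          measure_ball_lt_top.ne hA hg hg0 hsob
    _ ≤ 2 * (2 * r) * ⨍ y in ball x₀ r, g y := by
        gcongr
        · exact setAverage_nonneg measurableSet_ball hg0
        · exact diam_ball hr.le
    _ = 4 * (r * ⨍ y in ball x₀ r, g y) := by ring
    _ ≤ _ := (mul_le_mul_of_nonneg_left hHolder four_pos.le).trans_eq (mul_assoc _ _ _).symm

end Oscillation

theorem stmt13_general (n : ℕ) (hn : 2 < n) (p μ : ℝ)
    (Ω : Set (EuclideanSpace ℝ (Fin n))) (hΩ : IsOpen Ω)
    (A : EuclideanSpace ℝ (Fin n) → EuclideanSpace ℝ (Fin n) → EuclideanSpace ℝ (Fin n))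
    (hmeas : ∀ ξ, Measurable fun x => A x ξ)
    (g : EuclideanSpace ℝ (Fin n) → ℝ) (hg0 : ∀ x, 0 ≤ g x) (hgm : Measurable g)
    (hgloc : ∀ K ⊆ Ω, IsCompact K → IntegrableOn (fun x => g x ^ (n : ℝ)) K volume)
    (hsob : ∀ x ∈ Ω, ∀ y ∈ Ω, ∀ ξ,
      ‖A x ξ - A y ξ‖ ≤ (g x + g y) * ‖x - y‖ * (μ ^ 2 + ‖ξ‖ ^ 2) ^ ((p - 1) / 2)) :
    ∀ K ⊆ Ω, IsCompact K →
      Filter.limsup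
        (fun R => ⨆ r ∈ Set.Ioo (0 : ℝ) R, ⨆ x₀ ∈ K,
          ⨍ x in ball x₀ r, oscV p μ A (ball x₀ r) x)
        (𝓝[>] (0 : ℝ)) = 0 := by
  intro K hKΩ hKc
  have : NeZero n := ⟨by omega⟩
  obtain ⟨δ, hδ, hδΩ⟩ := hKc.exists_cthickening_subset_open hΩ hKΩ
  set K' := cthickening δ K
  have hK'c : IsCompact K' := hKc.cthickening
  have hK'm : MeasurableSet K' := isClosed_cthickening.measurableSet
  have hgn := hgloc K' hδΩ hK'c
  have hg : IntegrableOn g K' := integrableOn_of_integrableOn_rpow hK'c.measure_lt_top.ne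
    (by norm_cast; omega) hg0 hgm.aestronglyMeasurable hgn
  set C := 4 * volume.real (ball (0 : EuclideanSpace ℝ (Fin n)) 1) ^ (-(n : ℝ)⁻¹)
  have hC : 0 < C := mul_pos four_pos <| Real.rpow_pos_of_pos
    (ENNReal.toReal_pos (measure_ball_pos _ _ one_pos).ne' measure_ball_lt_top.ne) _
  refine limsup_iSup_Ioo_eq_zero (fun r => Real.iSup_nonneg fun x₀ => Real.iSup_nonneg fun _ =>
    setAverage_nonneg measurableSet_ball fun x _ => oscV_nonneg x) fun ε hε => ?_
  filter_upwards [hgn.eventually_forall_setIntegral_ball_le volume hK'm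
    (ε := (ε / C) ^ (n : ℝ)) (by positivity), Ioo_mem_nhdsGT hδ] with r hsmall hr
  refine Real.iSup_le (fun x₀ => Real.iSup_le (fun hx₀ => ?_) hε.le) hε.le
  have hBK : ball x₀ r ⊆ K' := ball_subset_closedBall.trans
    ((closedBall_subset_closedBall hr.2.le).trans (closedBall_subset_cthickening hx₀ δ))
  calc ⨍ x in ball x₀ r, oscV p μ A (ball x₀ r) x
      ≤ C * (∫ y in ball x₀ r, g y ^ (n : ℝ)) ^ (n : ℝ)⁻¹ :=
        setAverage_oscV_ball_le hr.1 (fun ξ => (hmeas ξ).aestronglyMeasurable) (fun y _ => hg0 y)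
          (hg.mono_set hBK) (hgn.mono_set hBK)
          fun x hx y hy => hsob x (hδΩ (hBK hx)) y (hδΩ (hBK hy))
    _ ≤ C * ((ε / C) ^ (n : ℝ)) ^ (n : ℝ)⁻¹ := by
        gcongr
        · exact setIntegral_nonneg measurableSet_ball fun y _ => Real.rpow_nonneg (hg0 y) _
        · exact hsmall x₀ hBK
    _ = ε := by
        rw [Real.rpow_rpow_inv (by positivity) (by positivity)]
        field_simp

/-- Lemma 2.13: if `A` has `(p-1)`-growth and a Sobolev-type dependence on `x`
(expressed via the Hajlasz pointwise inequality with `g ∈ Lⁿ_loc(Ω)`), then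
`x ↦ A(x,ξ)` is locally uniformly in `VMO`:
`limsup_{R→0} sup_{r<R} sup_{x₀∈K} ⨍_{B_r(x₀)} V(x, B_r(x₀)) dx = 0`
for every compact `K ⊆ Ω`. -/
theorem stmt13 (n : ℕ) (hn : 2 < n) (p μ ℓ : ℝ) (hp1 : 1 < p) (hp2 : p ≤ 2)
    (hμ0 : 0 ≤ μ) (hμ1 : μ ≤ 1) (hℓ : 0 < ℓ)
    (Ω : Set (EuclideanSpace ℝ (Fin n))) (hΩ : IsOpen Ω)
    (hΩb : Bornology.IsBounded Ω)
    (A : EuclideanSpace ℝ (Fin n) → EuclideanSpace ℝ (Fin n) → EuclideanSpace ℝ (Fin n))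
    (hmeas : ∀ ξ, Measurable fun x => A x ξ)
    (hcont : ∀ x, Continuous fun ξ => A x ξ)
    (hgrowth : ∀ x ∈ Ω, ∀ ξ, ‖A x ξ‖ ≤ ℓ * (μ ^ 2 + ‖ξ‖ ^ 2) ^ ((p - 1) / 2))
    (g : EuclideanSpace ℝ (Fin n) → ℝ) (hg0 : ∀ x, 0 ≤ g x) (hgm : Measurable g)
    (hgloc : ∀ K ⊆ Ω, IsCompact K → IntegrableOn (fun x => g x ^ (n : ℝ)) K volume)
    (hsob : ∀ x ∈ Ω, ∀ y ∈ Ω, ∀ ξ,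
      ‖A x ξ - A y ξ‖ ≤ (g x + g y) * ‖x - y‖ * (μ ^ 2 + ‖ξ‖ ^ 2) ^ ((p - 1) / 2)) :
    ∀ K ⊆ Ω, IsCompact K →
      Filter.limsup
        (fun R => ⨆ r ∈ Set.Ioo (0 : ℝ) R, ⨆ x₀ ∈ K,
          ⨍ x in ball x₀ r, oscV p μ A (ball x₀ r) x)
        (𝓝[>] (0 : ℝ)) = 0 :=
  stmt13_general n hn p μ Ω hΩ A hmeas g hg0 hgm hgloc hsob
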